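/- There exists a non-standard model N with two agents in which the axiom schemes of H⊢K are all satisfied at every world but the formula x = c → (P(x) → P(c)) fails at some world under some valuation; concretely, with D_agt = {α, β}, a single world w, J(c, w, Δ) = α where Δ is the diagonal of D, J(c, w, {α}) = β, J(P,w) = {α}, and v(x) = α. -/

import Mathlib

/-- The two sorts (types) of the two-sorted term-modal language. -/
inductive TMSort : Type
  | agt | obj
deriving DecidableEq

/-- A signature for the two-sorted term-modal language. -/
structure Sig where
  Var : Type
  Con : Type
  Fn : Type
  Rel : Type
  varSort : Var → TMSort
  conSort : Con → TMSort
  deqVar : DecidableEq Var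

attribute [instance] Sig.deqVar

/-- Terms: variables, constants, function applications. -/
inductive Tm (S : Sig) : Type
  | var (x : S.Var)
  | con (c : S.Con)
  | app (f : S.Fn) (ts : List (Tm S))

/-- Formulas of term-modal logic. -/
inductive Fm (S : Sig) : Type
  | rel (P : S.Rel) (ts : List (Tm S))
  | eq (t s : Tm S)
  | neg (φ : Fm S)
  | and (φ ψ : Fm S)
  | all (x : S.Var) (φ : Fm S)
  | know (t : Tm S) (φ : Fm S)

variable {S : Sig}

/-- Substitution of variable `y` for variable `x` in a term. -/
def Tm.substT (y x : S.Var) : Tm S → Tm S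
  | .var z => if z = x then .var y else .var z
  | .con c => .con c
  | .app f ts => .app f (ts.attach.map fun t => t.1.substT y x)


decreasing_by
  have := List.sizeOf_lt_of_mem t.2
  simp only [Tm.app.sizeOf_spec]
  omega

/-- Variables occurring in a term. -/
def Tm.fvT : Tm S → List S.Var
  | .var z => [z]
  | .con _ => []
  | .app _ ts => ts.attach.flatMap fun t => t.1.fvT


decreasing_by
  have := List.sizeOf_lt_of_mem t.2
  simp only [Tm.app.sizeOf_spec]
  omega

/-- Substitution of variable `y` for free occurrences of variable `x` in a formula. -/
def Fm.substF (y x : S.Var) : Fm S → Fm S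
  | .rel P ts => .rel P (ts.map (Tm.substT y x))
  | .eq t s => .eq (t.substT y x) (s.substT y x)
  | .neg φ => .neg (φ.substF y x)
  | .and φ ψ => .and (φ.substF y x) (ψ.substF y x)
  | .all z φ => if z = x then .all z φ else .all z (φ.substF y x)
  | .know t φ => .know (t.substT y x) (φ.substF y x)

/-- Free variables of a formula. -/
def Fm.fvF : Fm S → List S.Var
  | .rel _ ts => ts.flatMap Tm.fvT
  | .eq t s => t.fvT ++ s.fvT
  | .neg φ => φ.fvF
  | .and φ ψ => φ.fvF ++ ψ.fvF
  | .all z φ => φ.fvF.filter (· ≠ z)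
  | .know t φ => t.fvT ++ φ.fvF

/-- Bound (binder) variables of a formula. -/
def Fm.bvF : Fm S → List S.Var
  | .rel _ _ => []
  | .eq _ _ => []
  | .neg φ => φ.bvF
  | .and φ ψ => φ.bvF ++ ψ.bvF
  | .all z φ => z :: φ.bvF
  | .know _ φ => φ.bvF

/-- Defined connectives. -/
def Fm.imp (φ ψ : Fm S) : Fm S := .neg (.and φ (.neg ψ))
def Fm.ex (x : S.Var) (φ : Fm S) : Fm S := .neg (.all x (.neg φ))
def Fm.neq (t s : Tm S) : Fm S := .neg (.eq t s)

/-- The diagonal (interpretation of equality) over a domain. -/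
def diag (D : Type) : Set (List D) := {l | ∃ d : D, l = [d, d]}

/-- A non-standard model: the interpretation of constants and function symbols
depends additionally on a parameter set `X ⊆ D^n` (encoded as a set of lists),
intended to be the extension of the relation symbol they occur under. -/
structure NSModel (S : Sig) where
  D : Type
  W : Type
  hW : Nonempty W
  sortOf : D → TMSort
  hAgt : ∃ d, sortOf d = TMSort.agt
  hObj : ∃ d, sortOf d = TMSort.obj
  R : D → W → W → Prop
  Jc : S.Con → W → Set (List D) → D
  hJc : ∀ c w X, sortOf (Jc c w X) = S.conSort c
  Jf : S.Fn → W → Set (List D) → List D → D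
  JP : S.Rel → W → Set (List D)

/-- Extension of a term in a non-standard model, relative to world `w`,
parameter set `X` and valuation `v`. -/
def NSModel.extT (N : NSModel S) (w : N.W) (X : Set (List N.D)) (v : S.Var → N.D) :
    Tm S → N.D
  | .var x => v x
  | .con c => N.Jc c w X
  | .app f ts => N.Jf f w X (ts.attach.map fun t => N.extT w X v t.1)


decreasing_by
  have := List.sizeOf_lt_of_mem t.2
  simp only [Tm.app.sizeOf_spec]
  omega

/-- Satisfaction in a non-standard model. -/
def NSModel.Sat (N : NSModel S) : N.W → (S.Var → N.D) → Fm S → Prop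
  | w, v, .rel P ts => (ts.map fun t => N.extT w (N.JP P w) v t) ∈ N.JP P w
  | w, v, .eq t s => N.extT w (diag N.D) v t = N.extT w (diag N.D) v s
  | w, v, .neg φ => ¬ N.Sat w v φ
  | w, v, .and φ ψ => N.Sat w v φ ∧ N.Sat w v ψ
  | w, v, .all x φ => ∀ d : N.D, N.sortOf d = S.varSort x → N.Sat w (Function.update v x d) φ
  | w, v, .know t φ => ∀ w' : N.W, N.R (N.extT w ∅ v t) w w' → N.Sat w' v φ

/-- A valuation respecting the sorts of variables. -/
def NSModel.GoodVal (N : NSModel S) (v : S.Var → N.D) : Prop :=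
  ∀ x : S.Var, N.sortOf (v x) = S.varSort x

/-- Validity in the non-standard semantics. -/
def NSValid (φ : Fm S) : Prop :=
  ∀ (N : NSModel S) (w : N.W) (v : S.Var → N.D), N.GoodVal v → N.Sat w v φ

/-- A standard (TML) model: constants and function symbols are interpreted
world-relatively (non-rigidly), over a constant domain. -/
structure TMLModel (S : Sig) where
  D : Type
  W : Type
  hW : Nonempty W
  sortOf : D → TMSort
  hAgt : ∃ d, sortOf d = TMSort.agt
  hObj : ∃ d, sortOf d = TMSort.obj
  R : D → W → W → Prop
  Ic : S.Con → W → D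
  hIc : ∀ c w, sortOf (Ic c w) = S.conSort c
  If : S.Fn → W → List D → D
  IP : S.Rel → W → Set (List D)

/-- Extension of a term in a TML model. -/
def TMLModel.extT (M : TMLModel S) (w : M.W) (v : S.Var → M.D) : Tm S → M.D
  | .var x => v x
  | .con c => M.Ic c w
  | .app f ts => M.If f w (ts.attach.map fun t => M.extT w v t.1)


decreasing_by
  have := List.sizeOf_lt_of_mem t.2
  simp only [Tm.app.sizeOf_spec]
  omega

/-- Satisfaction in a TML model. -/
def TMLModel.Sat (M : TMLModel S) : M.W → (S.Var → M.D) → Fm S → Prop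
  | w, v, .rel P ts => (ts.map fun t => M.extT w v t) ∈ M.IP P w
  | w, v, .eq t s => M.extT w v t = M.extT w v s
  | w, v, .neg φ => ¬ M.Sat w v φ
  | w, v, .and φ ψ => M.Sat w v φ ∧ M.Sat w v ψ
  | w, v, .all x φ => ∀ d : M.D, M.sortOf d = S.varSort x → M.Sat w (Function.update v x d) φ
  | w, v, .know t φ => ∀ w' : M.W, M.R (M.extT w v t) w w' → M.Sat w' v φ

def TMLModel.GoodVal (M : TMLModel S) (v : S.Var → M.D) : Prop :=
  ∀ x : S.Var, M.sortOf (v x) = S.varSort x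

/-- Validity over the class of all frames in the TML semantics. -/
def TMLValid (φ : Fm S) : Prop :=
  ∀ (M : TMLModel S) (w : M.W) (v : S.Var → M.D), M.GoodVal v → M.Sat w v φ

/-- Propositional tautology: true under every Boolean valuation of formulas
that respects negation and conjunction. -/
def Taut (φ : Fm S) : Prop :=
  ∀ b : Fm S → Prop, (∀ ψ : Fm S, b ψ.neg ↔ ¬ b ψ) →
    (∀ ψ χ : Fm S, b (ψ.and χ) ↔ b ψ ∧ b χ) → b φ

/-- The Hilbert-style system H⊢K of Liberman et al. -/
inductive Prov : Fm S → Prop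
  | taut {φ : Fm S} : Taut φ → Prov φ
  | ui {x y : S.Var} {φ : Fm S} :
      S.varSort x = S.varSort y → y ∉ φ.bvF →
      Prov (Fm.imp (.all x φ) (φ.substF y x))
  | id {t : Tm S} : Prov (.eq t t)
  | ps {x y z : S.Var} {φ : Fm S} :
      S.varSort x = S.varSort z → S.varSort y = S.varSort z →
      x ∉ φ.bvF → y ∉ φ.bvF →
      Prov (Fm.imp (.eq (.var x) (.var y)) (Fm.imp (φ.substF x z) (φ.substF y z)))
  | eid {c : S.Con} {x : S.Var} :
      S.varSort x = S.conSort c →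
      Prov (Fm.imp (.eq (.con c) (.con c)) (Fm.ex x (.eq (.var x) (.con c))))
  | dd {x y : S.Var} :
      S.varSort x ≠ S.varSort y → Prov (Fm.neq (.var x) (.var y))
  | axK {t : Tm S} {φ ψ : Fm S} :
      Prov (Fm.imp (.know t (Fm.imp φ ψ)) (Fm.imp (.know t φ) (.know t ψ)))
  | barcan {t : Tm S} {x : S.Var} {φ : Fm S} :
      x ∉ t.fvT → Prov (Fm.imp (.all x (.know t φ)) (.know t (.all x φ)))
  | kni {t : Tm S} {x y : S.Var} :
      Prov (Fm.imp (Fm.neq (.var x) (.var y)) (.know t (Fm.neq (.var x) (.var y))))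
  | mp {φ ψ : Fm S} : Prov (Fm.imp φ ψ) → Prov φ → Prov ψ
  | nec {t : Tm S} {φ : Fm S} : Prov φ → Prov (.know t φ)
  | ug {x : S.Var} {φ ψ : Fm S} :
      x ∉ φ.fvF → Prov (Fm.imp φ ψ) → Prov (Fm.imp φ (.all x ψ))

section Aux
variable {S : Sig}

lemma Tm.my_induction {motive : Tm S → Prop}
    (hv : ∀ x, motive (.var x)) (hc : ∀ c, motive (.con c))
    (ha : ∀ f ts, (∀ t ∈ ts, motive t) → motive (.app f ts)) : ∀ t, motive t := by
  have H : ∀ n (t : Tm S), sizeOf t ≤ n → motive t := by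
    intro n
    induction n with
    | zero =>
      intro t ht
      cases t <;> simp only [Tm.var.sizeOf_spec, Tm.con.sizeOf_spec, Tm.app.sizeOf_spec] at ht <;> omega
    | succ n ih =>
      intro t ht
      cases t with
      | var x => exact hv x
      | con c => exact hc c
      | app f ts =>
        refine ha f ts fun t' ht' => ih t' ?_
        have := List.sizeOf_lt_of_mem ht'
        simp only [Tm.app.sizeOf_spec] at ht
        omega
  exact fun t => H (sizeOf t) t le_rfl

lemma NSModel.extT_app (N : NSModel S) (w : N.W) (X : Set (List N.D)) (v : S.Var → N.D)
    (f : S.Fn) (ts : List (Tm S)) :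
    N.extT w X v (.app f ts) = N.Jf f w X (ts.map (N.extT w X v)) := by
  rw [NSModel.extT]
  congr 1
  simp

lemma extT_congr (N : NSModel S) (w : N.W) (X : Set (List N.D)) :
    ∀ (t : Tm S) (v v' : S.Var → N.D), (∀ z ∈ t.fvT, v z = v' z) →
      N.extT w X v t = N.extT w X v' t := by
  intro t
  induction t using Tm.my_induction with
  | hv x => intro v v' h; simp only [NSModel.extT]; exact h x (by simp [Tm.fvT])
  | hc c => intro v v' h; simp [NSModel.extT]
  | ha f ts ih =>
    intro v v' h
    rw [N.extT_app, N.extT_app]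
    congr 1
    refine List.map_congr_left fun t' ht' => ?_
    refine ih t' ht' v v' fun z hz => h z ?_
    rw [Tm.fvT]
    simp only [List.mem_flatMap, List.mem_attach]
    exact ⟨⟨t', ht'⟩, trivial, hz⟩

lemma extT_subst (N : NSModel S) (w : N.W) (X : Set (List N.D)) (y xv : S.Var) :
    ∀ (t : Tm S) (v : S.Var → N.D),
      N.extT w X v (t.substT y xv) = N.extT w X (Function.update v xv (v y)) t := by
  intro t
  induction t using Tm.my_induction with
  | hv z =>
    intro v
    by_cases h : z = xv <;> simp [Tm.substT, NSModel.extT, h, Function.update]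
  | hc c => intro v; simp [Tm.substT, NSModel.extT]
  | ha f ts ih =>
    intro v
    have hsub : Tm.substT y xv (.app f ts) = .app f (ts.map (Tm.substT y xv)) := by
      rw [Tm.substT]; congr 1; simp
    rw [hsub, N.extT_app, N.extT_app, List.map_map]
    congr 1
    exact List.map_congr_left fun t' ht' => ih t' ht' v

end Aux

section Aux2
variable {S : Sig}

lemma Sat_congr (N : NSModel S) :
    ∀ (φ : Fm S) (w : N.W) (v v' : S.Var → N.D), (∀ z ∈ φ.fvF, v z = v' z) →
      (N.Sat w v φ ↔ N.Sat w v' φ) := by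
  intro φ
  induction φ with
  | rel P ts =>
    intro w v v' h
    simp only [NSModel.Sat]
    have : (ts.map fun t => N.extT w (N.JP P w) v t) = ts.map fun t => N.extT w (N.JP P w) v' t := by
      refine List.map_congr_left fun t ht => extT_congr N _ _ t v v' fun z hz => h z ?_
      simp only [Fm.fvF, List.mem_flatMap]
      exact ⟨t, ht, hz⟩
    rw [this]
  | eq t s =>
    intro w v v' h
    simp only [NSModel.Sat]
    rw [extT_congr N _ _ t v v' fun z hz => h z (by simp [Fm.fvF, hz]),
        extT_congr N _ _ s v v' fun z hz => h z (by simp [Fm.fvF, hz])]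
  | neg φ ih =>
    intro w v v' h
    simp only [NSModel.Sat]
    rw [ih w v v' h]
  | and φ ψ ihφ ihψ =>
    intro w v v' h
    simp only [NSModel.Sat]
    rw [ihφ w v v' fun z hz => h z (by simp [Fm.fvF, hz]),
        ihψ w v v' fun z hz => h z (by simp [Fm.fvF, hz])]
  | all z φ ih =>
    intro w v v' h
    simp only [NSModel.Sat]
    refine forall_congr' fun d => imp_congr_right fun _ => ?_
    refine ih w _ _ fun u hu => ?_
    by_cases hz : u = z
    · simp [hz, Function.update]
    · simp only [Function.update]
      simp only [hz, dite_eq_ite, if_neg]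
      · exact h u (by simp [Fm.fvF, List.mem_filter, hu, hz])
  | know t φ ih =>
    intro w v v' h
    simp only [NSModel.Sat]
    rw [extT_congr N _ _ t v v' fun z hz => h z (by simp [Fm.fvF, hz])]
    exact forall_congr' fun w' => imp_congr_right fun _ =>
      ih w' v v' fun z hz => h z (by simp [Fm.fvF, hz])

lemma Sat_subst (N : NSModel S) :
    ∀ (φ : Fm S) (y xv : S.Var), y ∉ φ.bvF → ∀ (w : N.W) (v : S.Var → N.D),
      (N.Sat w v (φ.substF y xv) ↔ N.Sat w (Function.update v xv (v y)) φ) := by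
  intro φ
  induction φ with
  | rel P ts =>
    intro y xv _ w v
    simp only [Fm.substF, NSModel.Sat, List.map_map]
    have : (ts.map fun t => N.extT w (N.JP P w) v (t.substT y xv))
        = ts.map fun t => N.extT w (N.JP P w) (Function.update v xv (v y)) t :=
      List.map_congr_left fun t _ => extT_subst N _ _ _ _ t v
    rw [show (List.map ((fun t => N.extT w (N.JP P w) v t) ∘ Tm.substT y xv) ts)
        = ts.map fun t => N.extT w (N.JP P w) v (t.substT y xv) from rfl, this]
  | eq t s =>
    intro y xv _ w v
    simp only [Fm.substF, NSModel.Sat, extT_subst]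
  | neg φ ih =>
    intro y xv hb w v
    simp only [Fm.substF, NSModel.Sat]
    rw [ih y xv hb w v]
  | and φ ψ ihφ ihψ =>
    intro y xv hb w v
    simp only [Fm.bvF, List.mem_append] at hb
    push_neg at hb
    simp only [Fm.substF, NSModel.Sat]
    rw [ihφ y xv hb.1 w v, ihψ y xv hb.2 w v]
  | all z φ ih =>
    intro y xv hb w v
    simp only [Fm.bvF, List.mem_cons] at hb
    push_neg at hb
    obtain ⟨hyz, hb⟩ := hb
    rw [Fm.substF]
    by_cases hzx : z = xv
    · rw [if_pos hzx]
      subst hzx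
      refine Sat_congr N _ w v _ fun u hu => ?_
      simp only [Fm.fvF, List.mem_filter, decide_eq_true_eq] at hu
      simp [Function.update, hu.2]
    · rw [if_neg hzx]
      simp only [NSModel.Sat]
      refine forall_congr' fun d => imp_congr_right fun _ => ?_
      rw [ih y xv hb w (Function.update v z d)]
      have h1 : (Function.update v z d) y = v y := by
        simp [Function.update, hyz]
      rw [h1, Function.update_comm (fun h => hzx h)]
  | know t φ ih =>
    intro y xv hb w v
    simp only [Fm.bvF] at hb
    simp only [Fm.substF, NSModel.Sat, extT_subst]
    exact forall_congr' fun w' => imp_congr_right fun _ => ih y xv hb w' v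

lemma Sat_imp (N : NSModel S) (w : N.W) (v : S.Var → N.D) (φ ψ : Fm S) :
    N.Sat w v (Fm.imp φ ψ) ↔ (N.Sat w v φ → N.Sat w v ψ) := by
  simp only [Fm.imp, NSModel.Sat]
  tauto

lemma GoodVal_update (N : NSModel S) (v : S.Var → N.D) (hv : N.GoodVal v)
    (x : S.Var) (d : N.D) (hd : N.sortOf d = S.varSort x) :
    N.GoodVal (Function.update v x d) := by
  intro z
  by_cases h : z = x
  · subst h; simpa using hd
  · simp only [Function.update]
    simp only [h, dite_eq_ite, if_neg]
    exact hv z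

theorem soundness (N : NSModel S) :
    ∀ φ : Fm S, Prov φ → ∀ (w : N.W) (v : S.Var → N.D), N.GoodVal v → N.Sat w v φ := by
  intro φ hφ
  induction hφ with
  | @taut φ h =>
    intro w v _
    exact h (fun ψ => N.Sat w v ψ) (fun ψ => by simp [NSModel.Sat]) (fun ψ χ => by simp [NSModel.Sat])
  | @ui x y φ hsort hbv =>
    intro w v hv
    rw [Sat_imp]
    intro hall
    rw [Sat_subst N φ y x hbv w v]
    exact hall (v y) (by rw [hv y, hsort])
  | @id t =>
    intro w v _
    simp [NSModel.Sat]
  | @ps x y z φ hxz hyz hxb hyb =>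
    intro w v hv
    rw [Sat_imp]
    intro heq
    rw [Sat_imp]
    intro h1
    simp only [NSModel.Sat, NSModel.extT] at heq
    rw [Sat_subst N φ y z hyb w v]
    rw [Sat_subst N φ x z hxb w v] at h1
    rwa [← heq]
  | @eid c x hsort =>
    intro w v hv
    rw [Sat_imp]
    intro _
    simp only [Fm.ex, NSModel.Sat]
    push_neg
    refine ⟨N.Jc c w (diag N.D), by rw [N.hJc, hsort], ?_⟩
    simp [NSModel.extT, Function.update]
  | @dd x y h =>
    intro w v hv
    simp only [Fm.neq, NSModel.Sat, NSModel.extT]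
    intro heq
    apply h
    rw [← hv x, ← hv y, heq]
  | @axK t φ ψ =>
    intro w v hv
    rw [Sat_imp]
    intro h1
    rw [Sat_imp]
    intro h2
    intro w' hr
    exact (Sat_imp N w' v φ ψ).mp (h1 w' hr) (h2 w' hr)
  | @barcan t x φ hft =>
    intro w v hv
    rw [Sat_imp]
    intro h w' hr d hd
    refine h d hd w' ?_
    rwa [extT_congr N w ∅ t (Function.update v x d) v fun z hz => by
      have : z ≠ x := fun h => hft (h ▸ hz)
      simp [Function.update, this]]
  | @kni t x y =>
    intro w v hv
    rw [Sat_imp]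
    intro h w' hr
    simpa only [Fm.neq, NSModel.Sat, NSModel.extT] using
      (by simpa only [Fm.neq, NSModel.Sat, NSModel.extT] using h : v x ≠ v y)
  | @mp φ ψ h1 h2 ih1 ih2 =>
    intro w v hv
    exact (Sat_imp N w v φ ψ).mp (ih1 w v hv) (ih2 w v hv)
  | @nec t φ h ih =>
    intro w v hv w' _
    exact ih w' v hv
  | @ug x φ ψ hfv h ih =>
    intro w v hv
    rw [Sat_imp]
    intro hφ d hd
    have hv' := GoodVal_update N v hv x d hd
    have hφ' : N.Sat w (Function.update v x d) φ := by
      rw [Sat_congr N φ w (Function.update v x d) v fun z hz => by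
        have : z ≠ x := fun h => hfv (h ▸ hz)
        simp [Function.update, this]]
      exact hφ
    exact (Sat_imp N w _ φ ψ).mp (ih w _ hv') hφ'

end Aux2

open Classical in
/-- The concrete countermodel. -/
@[reducible] noncomputable def ctrModel (S : Sig) (c : S.Con) : NSModel S where
  D := Fin 3
  W := Unit
  hW := ⟨()⟩
  sortOf := fun d => if d.val ≤ 1 then TMSort.agt else TMSort.obj
  hAgt := ⟨0, rfl⟩
  hObj := ⟨2, rfl⟩
  R := fun _ _ _ => False
  Jc := fun c' _ X =>
    if S.conSort c' = TMSort.agt then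
      (if c' = c ∧ X = {[(0 : Fin 3)]} then 1 else 0)
    else 2
  hJc := by
    intro c' w X
    by_cases h : S.conSort c' = TMSort.agt
    · rw [if_pos h, h]
      by_cases h2 : c' = c ∧ X = {[(0 : Fin 3)]}
      · rw [if_pos h2]; rfl
      · rw [if_neg h2]; rfl
    · rw [if_neg h]
      cases hs : S.conSort c' with
      | agt => exact absurd hs h
      | obj => rfl
  Jf := fun _ _ _ _ => 0
  JP := fun _ _ => {[(0 : Fin 3)]}

theorem stmt18' (S : Sig) (x : S.Var) (c : S.Con) (P : S.Rel)
    (hx : S.varSort x = TMSort.agt) (hc : S.conSort c = TMSort.agt) :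
    ∃ (N : NSModel S) (w : N.W) (v : S.Var → N.D) (α β : N.D),
      (∀ w' : N.W, w' = w) ∧
      N.GoodVal v ∧
      N.sortOf α = TMSort.agt ∧ N.sortOf β = TMSort.agt ∧ α ≠ β ∧
      (∀ d : N.D, N.sortOf d = TMSort.agt → d = α ∨ d = β) ∧
      N.Jc c w (diag N.D) = α ∧
      N.Jc c w {[α]} = β ∧
      N.JP P w = {[α]} ∧
      v x = α ∧
      (∀ φ : Fm S, Prov φ → ∀ (w' : N.W) (v' : S.Var → N.D), N.GoodVal v' → N.Sat w' v' φ) ∧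
      ¬ N.Sat w v (Fm.imp (.eq (.var x) (.con c)) (Fm.imp (.rel P [.var x]) (.rel P [.con c]))) := by
  classical
  refine ⟨ctrModel S c, (), fun z => if S.varSort z = TMSort.agt then 0 else 2, 0, 1,
    fun w' => rfl, ?_, rfl, rfl, ?_, ?_, ?_, ?_, rfl, by simp [hx], ?_, ?_⟩
  · -- GoodVal
    intro z
    by_cases h : S.varSort z = TMSort.agt
    · simp [ctrModel, h]
    · cases hs : S.varSort z with
      | agt => exact absurd hs h
      | obj => simp [ctrModel, hs]
  · -- alpha ne beta
    exact (by decide : (0 : Fin 3) ≠ 1)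
  · -- two agents
    intro d hd
    simp only [ctrModel] at hd
    fin_cases d <;> simp_all
  · -- Jc diag = 0
    have hne : diag (Fin 3) ≠ {[(0 : Fin 3)]} := by
      intro h
      have : [(0 : Fin 3), 0] ∈ diag (Fin 3) := ⟨0, rfl⟩
      rw [h] at this
      simp [Set.mem_singleton_iff] at this
    show (if S.conSort c = TMSort.agt then _ else _) = _
    rw [if_pos hc, if_neg (fun h => hne h.2)]
  · -- Jc {[0]} = 1
    show (if S.conSort c = TMSort.agt then _ else _) = _
    rw [if_pos hc, if_pos ⟨rfl, rfl⟩]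
  · -- soundness
    exact fun φ h w' v' hv' => soundness _ φ h w' v' hv'
  · -- failure
    rw [Sat_imp, Sat_imp]
    intro h
    have hne : diag (Fin 3) ≠ {[(0 : Fin 3)]} := by
      intro hh
      have : [(0 : Fin 3), 0] ∈ diag (Fin 3) := ⟨0, rfl⟩
      rw [hh] at this
      simp [Set.mem_singleton_iff] at this
    have hJd : (ctrModel S c).Jc c () (diag (Fin 3)) = 0 := by
      show (if S.conSort c = TMSort.agt then
          if c = c ∧ diag (Fin 3) = {[(0 : Fin 3)]} then 1 else 0 else 2) = 0
      rw [if_pos hc,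
        if_neg (show ¬(c = c ∧ diag (Fin 3) = {[(0 : Fin 3)]}) from fun hh => hne hh.2)]
    have h1 : (ctrModel S c).Sat () (fun z => if S.varSort z = TMSort.agt then 0 else 2)
        (.eq (.var x) (.con c)) := by
      simp only [NSModel.Sat, NSModel.extT]
      rw [if_pos hc,
        if_neg (show ¬(True ∧ diag (Fin 3) = {[(0 : Fin 3)]}) from fun hh => hne hh.2)]
      simp [hx]
    have h2 : (ctrModel S c).Sat () (fun z => if S.varSort z = TMSort.agt then 0 else 2)
        (.rel P [.var x]) := by
      simp only [NSModel.Sat, NSModel.extT, List.map_cons, List.map_nil]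
      simp [ctrModel, hx]
    have h3 := h h1 h2
    simp only [NSModel.Sat, NSModel.extT, List.map_cons, List.map_nil] at h3
    rw [if_pos hc] at h3
    simp [Set.mem_singleton_iff] at h3

/-- there is a two-agent, one-world non-standard model satisfying all
H⊢K-provable formulas (in particular all axiom instances) at every world, but
falsifying `x = c → (P(x) → P(c))`: with agents α ≠ β, `J(c,w,Δ) = α`,
`J(c,w,{[α]}) = β`, `J(P,w) = {[α]}` and `v x = α`. -/
theorem stmt18 (S : Sig) (x : S.Var) (c : S.Con) (P : S.Rel)
    (hx : S.varSort x = TMSort.agt) (hc : S.conSort c = TMSort.agt) :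
    ∃ (N : NSModel S) (w : N.W) (v : S.Var → N.D) (α β : N.D),
      (∀ w' : N.W, w' = w) ∧
      N.GoodVal v ∧
      N.sortOf α = TMSort.agt ∧ N.sortOf β = TMSort.agt ∧ α ≠ β ∧
      (∀ d : N.D, N.sortOf d = TMSort.agt → d = α ∨ d = β) ∧
      N.Jc c w (diag N.D) = α ∧
      N.Jc c w {[α]} = β ∧
      N.JP P w = {[α]} ∧
      v x = α ∧
      (∀ φ : Fm S, Prov φ → ∀ (w' : N.W) (v' : S.Var → N.D), N.GoodVal v' → N.Sat w' v' φ) ∧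
      ¬ N.Sat w v (Fm.imp (.eq (.var x) (.con c)) (Fm.imp (.rel P [.var x]) (.rel P [.con c]))) :=
  stmt18' S x c P hx hc
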